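/- arXiv:1805.04245 — 5 statements merged into one kernel-verified Lean document; each statement's English description precedes it below -/
import Mathlib

section
/- A function g : ℤⁿ → ℝ ∪ {+∞} with nonempty effective domain is L♮-convex if and only if the function g̃ : ℤ^{n+1} → ℝ ∪ {+∞} defined by g̃(p₀, p) = g(p - p₀·1), where 1 = (1,...,1), is submodular in n+1 variables. -/
/-- The set of multimodular directions
`F = {-e₁, e₁-e₂, e₂-e₃, …, e_{n-1}-eₙ, eₙ}` (1-indexed unit vectors). -/
def mmDir (n : ℕ) : Set (Fin n → ℤ) :=
  {d | ∃ k ≤ n, d = fun j : Fin n =>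
    (if (j : ℕ) + 1 = k then 1 else 0) - (if (j : ℕ) + 1 = k + 1 then 1 else 0)}

/-- `f : ℤⁿ → ℝ ∪ {+∞}` is multimodular. -/
def Multimodular {n : ℕ} (f : (Fin n → ℤ) → WithTop ℝ) : Prop :=
  ∀ z : Fin n → ℤ, f z ≠ ⊤ →
    ∀ d ∈ mmDir n, ∀ d' ∈ mmDir n, d ≠ d' →
      f z + f (z + d + d') ≤ f (z + d) + f (z + d')

/-- Submodularity on `ℤᵐ`. -/
def Submodular {m : ℕ} (h : (Fin m → ℤ) → WithTop ℝ) : Prop :=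
  ∀ x y : Fin m → ℤ, h (x ⊔ y) + h (x ⊓ y) ≤ h x + h y

/-- L♮-convexity via discrete midpoint convexity. -/
def LnatConvex {n : ℕ} (g : (Fin n → ℤ) → WithTop ℝ) : Prop :=
  ∀ p q : Fin n → ℤ,
    g (fun j => Int.fdiv (p j + q j + 1) 2) + g (fun j => Int.fdiv (p j + q j) 2)
      ≤ g p + g q

/-!
Discrete midpoint convexity passes from `g` to `g̃(p₀, p) = g(p - p₀·1)`: shifting by `p₀`
commutes with halving when `p₀ + q₀` is even and exchanges rounding up and down when it is odd.
Midpoint convexity implies submodularity by induction on `‖p - q‖∞`, comparing `p, q` with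
their two rounded midpoints. Conversely, submodularity of `g̃` at `(0, p)` and `(α, q + α·1)` is
translation submodularity `g((p - α·1) ∨ q) + g(p ∧ (q + α·1)) ≤ g(p) + g(q)` for `α ≥ 0`; two
such moves with `α = ⌈‖p - q‖∞ / 2⌉` keep `p + q` and decrease `‖p - q‖∞`, so midpoint
convexity again follows by induction.
-/

section Midpoints

variable {ι : Type*}

-- `Int` division by `2` rounds down, so these are `⌈(p + q) / 2⌉` and `⌊(p + q) / 2⌋`.
def ceilMid (p q : ι → ℤ) : ι → ℤ := fun j => (p j + q j + 1) / 2

def floorMid (p q : ι → ℤ) : ι → ℤ := fun j => (p j + q j) / 2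

theorem lnatConvex_iff_ceilMid_floorMid {n : ℕ} {g : (Fin n → ℤ) → WithTop ℝ} :
    LnatConvex g ↔ ∀ p q, g (ceilMid p q) + g (floorMid p q) ≤ g p + g q := by
  simp only [LnatConvex, Int.fdiv_eq_ediv_of_nonneg _ zero_le_two]
  rfl

theorem sup_eq_ceilMid {p q : ι → ℤ} (hpq : ∀ j, (p j - q j).natAbs ≤ 1) :
    p ⊔ q = ceilMid p q := by
  funext j
  simp only [Pi.sup_apply, ceilMid]
  have := hpq j
  omega

theorem inf_eq_floorMid {p q : ι → ℤ} (hpq : ∀ j, (p j - q j).natAbs ≤ 1) :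
    p ⊓ q = floorMid p q := by
  funext j
  simp only [Pi.inf_apply, floorMid]
  have := hpq j
  omega

end Midpoints

theorem Pi.int_induction_on_natAbs_sub {ι : Type*} [Fintype ι] {P : (ι → ℤ) → (ι → ℤ) → Prop}
    (base : ∀ p q, (∀ j, (p j - q j).natAbs ≤ 1) → P p q)
    (step : ∀ K : ℕ, 2 ≤ K → (∀ p q, (∀ j, (p j - q j).natAbs ≤ K - 1) → P p q) →
      ∀ p q, (∀ j, (p j - q j).natAbs ≤ K) → P p q)
    (p q : ι → ℤ) : P p q := by
  suffices h : ∀ K : ℕ, ∀ p q, (∀ j, (p j - q j).natAbs ≤ K) → P p q from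
    h _ p q fun j => Finset.le_sup (f := fun j => (p j - q j).natAbs) (Finset.mem_univ j)
  intro K
  induction K using Nat.strong_induction_on with
  | _ K IH =>
    rcases Nat.lt_or_ge K 2 with hK | hK
    · exact fun p q hpq => base p q fun j => (hpq j).trans (by omega)
    · exact step K hK (IH (K - 1) (by omega))

theorem LnatConvex.submodular {m : ℕ} {h : (Fin m → ℤ) → WithTop ℝ} (hh : LnatConvex h) :
    Submodular h := by
  rw [lnatConvex_iff_ceilMid_floorMid] at hh
  intro p q
  induction p, q using Pi.int_induction_on_natAbs_sub with
  | base p q hpq => rw [sup_eq_ceilMid hpq, inf_eq_floorMid hpq]; exact hh p q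
  | step K hK IH p q hpq =>
    by_cases htop : h p + h q = ⊤
    · exact htop ▸ le_top
    set r := ceilMid p q
    set s := floorMid p q
    have hr : ∀ j, r j = (p j + q j + 1) / 2 := fun _ => rfl
    have hs : ∀ j, s j = (p j + q j) / 2 := fun _ => rfl
    have hrs_ne_top : h r + h s ≠ ⊤ := ne_top_of_le_ne_top htop (hh p q)
    -- Submodularity for five pairs at distance `≤ K - 1` adds up to the one for `p, q`.
    set a := (p ⊔ r) ⊓ (q ⊔ s)
    set b := (p ⊓ r) ⊔ (q ⊓ s)
    have I1 : h (p ⊔ r) + h (p ⊓ r) ≤ h p + h r :=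
      IH p r fun j => by have := hpq j; rw [hr]; omega
    have I2 : h (q ⊔ s) + h (q ⊓ s) ≤ h q + h s :=
      IH q s fun j => by have := hpq j; rw [hs]; omega
    have I3 : h (p ⊔ q) + h a ≤ h (p ⊔ r) + h (q ⊔ s) := by
      have hsup : (p ⊔ r) ⊔ (q ⊔ s) = p ⊔ q := by
        funext j; have := hpq j; simp only [Pi.sup_apply, hr, hs]; omega
      simpa only [hsup] using IH (p ⊔ r) (q ⊔ s) fun j => by
        have := hpq j; simp only [Pi.sup_apply, hr, hs]; omega
    have I4 : h b + h (p ⊓ q) ≤ h (p ⊓ r) + h (q ⊓ s) := by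
      have hinf : (p ⊓ r) ⊓ (q ⊓ s) = p ⊓ q := by
        funext j; have := hpq j; simp only [Pi.inf_apply, hr, hs]; omega
      simpa only [hinf] using IH (p ⊓ r) (q ⊓ s) fun j => by
        have := hpq j; simp only [Pi.inf_apply, hr, hs]; omega
    have I5 : h r + h s ≤ h a + h b := by
      have hsup : a ⊔ b = r := by
        funext j; have := hpq j; simp only [a, b, Pi.sup_apply, Pi.inf_apply, hr, hs]; omega
      have hinf : a ⊓ b = s := by
        funext j; have := hpq j; simp only [a, b, Pi.sup_apply, Pi.inf_apply, hr, hs]; omega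
      simpa only [hsup, hinf] using IH a b fun j => by
        have := hpq j; simp only [a, b, Pi.sup_apply, Pi.inf_apply, hr, hs]; omega
    refine (WithTop.add_le_add_iff_right hrs_ne_top).mp ?_
    calc h (p ⊔ q) + h (p ⊓ q) + (h r + h s)
        ≤ h (p ⊔ q) + h (p ⊓ q) + (h a + h b) := by gcongr
      _ = (h (p ⊔ q) + h a) + (h b + h (p ⊓ q)) := by ac_rfl
      _ ≤ (h (p ⊔ r) + h (q ⊔ s)) + (h (p ⊓ r) + h (q ⊓ s)) := add_le_add I3 I4
      _ = (h (p ⊔ r) + h (p ⊓ r)) + (h (q ⊔ s) + h (q ⊓ s)) := by ac_rfl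
      _ ≤ (h p + h r) + (h q + h s) := add_le_add I1 I2
      _ = h p + h q + (h r + h s) := by ac_rfl

def translationLift {n : ℕ} (g : (Fin n → ℤ) → WithTop ℝ) : (Fin (n + 1) → ℤ) → WithTop ℝ :=
  fun p => g (fun i => p i.succ - p 0)

theorem LnatConvex.translationLift {n : ℕ} {g : (Fin n → ℤ) → WithTop ℝ} (hg : LnatConvex g) :
    LnatConvex (translationLift g) := by
  rw [lnatConvex_iff_ceilMid_floorMid] at hg ⊢
  intro x y
  set x' : Fin n → ℤ := fun i => x i.succ - x 0
  set y' : Fin n → ℤ := fun i => y i.succ - y 0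
  change g (fun i => ceilMid x y i.succ - ceilMid x y 0)
    + g (fun i => floorMid x y i.succ - floorMid x y 0) ≤ g x' + g y'
  -- Rounding commutes with an even shift; an odd one exchanges rounding up and down.
  rcases Int.even_or_odd (x 0 + y 0) with ⟨t, ht⟩ | ⟨t, ht⟩
  · have hceil : (fun i => ceilMid x y i.succ - ceilMid x y 0) = ceilMid x' y' := by
      funext i; simp only [ceilMid, x', y']; omega
    have hfloor : (fun i => floorMid x y i.succ - floorMid x y 0) = floorMid x' y' := by
      funext i; simp only [floorMid, x', y']; omega
    rw [hceil, hfloor]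
    exact hg x' y'
  · have hceil : (fun i => ceilMid x y i.succ - ceilMid x y 0) = floorMid x' y' := by
      funext i; simp only [ceilMid, floorMid, x', y']; omega
    have hfloor : (fun i => floorMid x y i.succ - floorMid x y 0) = ceilMid x' y' := by
      funext i; simp only [ceilMid, floorMid, x', y']; omega
    rw [hceil, hfloor, add_comm]
    exact hg x' y'

def TranslationSubmodular {ι : Type*} (g : (ι → ℤ) → WithTop ℝ) : Prop :=
  ∀ (α : ℕ) (p q : ι → ℤ), g ((p - (α : ι → ℤ)) ⊔ q) + g (p ⊓ (q + (α : ι → ℤ))) ≤ g p + g q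

theorem Submodular.translationSubmodular {n : ℕ} {g : (Fin n → ℤ) → WithTop ℝ}
    (hg : Submodular (translationLift g)) : TranslationSubmodular g := by
  intro α p q
  have key := hg (Fin.cons 0 p) (Fin.cons (α : ℤ) (q + (α : Fin n → ℤ)))
  simp only [translationLift] at key
  convert key using 3 <;> funext i <;>
    simp only [Pi.sup_apply, Pi.inf_apply, Pi.add_apply, Pi.sub_apply, Pi.natCast_apply,
      Fin.cons_succ, Fin.cons_zero] <;> omega

theorem TranslationSubmodular.lnatConvex {n : ℕ} {g : (Fin n → ℤ) → WithTop ℝ}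
    (hg : TranslationSubmodular g) : LnatConvex g := by
  rw [lnatConvex_iff_ceilMid_floorMid]
  intro p q
  induction p, q using Pi.int_induction_on_natAbs_sub with
  | base p q hpq =>
    simpa [← sup_eq_ceilMid hpq, ← inf_eq_floorMid hpq] using hg 0 p q
  | step K hK IH p q hpq =>
    -- Two translation steps by `⌈K / 2⌉` keep `p + q` and bring `p, q` to distance `≤ K - 1`.
    set α := (K + 1) / 2
    set a := (p - (α : Fin n → ℤ)) ⊔ q
    set b := p ⊓ (q + (α : Fin n → ℤ))
    set a' := (a - (α : Fin n → ℤ)) ⊔ b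
    set b' := a ⊓ (b + (α : Fin n → ℤ))
    have hsum : ∀ j, a' j + b' j = p j + q j := fun j => by
      simp only [a', b', a, b, Pi.sup_apply, Pi.inf_apply, Pi.add_apply, Pi.sub_apply,
        Pi.natCast_apply]
      omega
    have hdist : ∀ j, (a' j - b' j).natAbs ≤ K - 1 := fun j => by
      have := hpq j
      simp only [a', b', a, b, α, Pi.sup_apply, Pi.inf_apply, Pi.add_apply, Pi.sub_apply,
        Pi.natCast_apply]
      omega
    have hceil : ceilMid a' b' = ceilMid p q := funext fun j => by simp only [ceilMid, hsum]
    have hfloor : floorMid a' b' = floorMid p q := funext fun j => by simp only [floorMid, hsum]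
    calc g (ceilMid p q) + g (floorMid p q)
        ≤ g a' + g b' := hceil ▸ hfloor ▸ IH a' b' hdist
      _ ≤ g a + g b := hg α a b
      _ ≤ g p + g q := hg α p q

theorem lnatConvex_iff_submodular_lift_general {n : ℕ} (g : (Fin n → ℤ) → WithTop ℝ) :
    LnatConvex g ↔
      Submodular (fun p : Fin (n + 1) → ℤ =>
        g (fun i : Fin n => p i.succ - p 0)) :=
  ⟨fun hg => hg.translationLift.submodular,
    fun hg => Submodular.translationSubmodular hg |>.lnatConvex⟩

theorem lnatConvex_iff_submodular_lift {n : ℕ} (g : (Fin n → ℤ) → WithTop ℝ)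
    (hdom : ∃ p, g p ≠ ⊤) :
    LnatConvex g ↔
      Submodular (fun p : Fin (n + 1) → ℤ =>
        g (fun i : Fin n => p i.succ - p 0)) :=
  lnatConvex_iff_submodular_lift_general g
end

section
/- A quadratic function f(x) = xᵀAx on ℤⁿ with symmetric matrix A = (a_{ij}) is multimodular if and only if a_{ij} - a_{i,j+1} - a_{i+1,j} + a_{i+1,j+1} ≤ 0 for all 0 ≤ i < j ≤ n, where by convention a_{ij} = 0 whenever i = 0 or j = n+1. -/
/-!
For symmetric `A` the form `f(x) = xᵀAx` has constant mixed second differences: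
`f z + f (z + d + d') = f (z + d) + f (z + d') + 2 dᵀAd'`. So `f` is multimodular iff
`dᵀAd' ≤ 0` for all distinct directions `d, d'`. With `e₀ = eₙ₊₁ = 0`, the directions are
`eₖ - eₖ₊₁` for `0 ≤ k ≤ n`, and `(eᵢ - eᵢ₊₁)ᵀA(eⱼ - eⱼ₊₁)` is exactly the four-term expression
in the padded entries `aᵢⱼ`. That expression is symmetric in `i, j`, so only `i < j` has to be
checked.
-/

open Matrix

theorem sum_sum_mul_mul_eq_dotProduct_mulVec {ι R : Type*} [Fintype ι] [NonUnitalSemiring R]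
    (A : Matrix ι ι R) (x : ι → R) : ∑ i, ∑ j, x i * A i j * x j = x ⬝ᵥ A *ᵥ x := by
  simp only [dotProduct, mulVec, Finset.mul_sum, mul_assoc]

theorem Matrix.IsSymm.dotProduct_mulVec_comm {ι R : Type*} [Fintype ι] [CommSemiring R]
    {A : Matrix ι ι R} (hA : A.IsSymm) (u v : ι → R) : u ⬝ᵥ A *ᵥ v = v ⬝ᵥ A *ᵥ u := by
  rw [dotProduct_mulVec, ← mulVec_transpose, hA.eq, dotProduct_comm]

theorem Matrix.IsSymm.second_difference {ι R : Type*} [Fintype ι] [CommRing R]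
    {A : Matrix ι ι R} (hA : A.IsSymm) (x u v : ι → R) :
    x ⬝ᵥ A *ᵥ x + (x + u + v) ⬝ᵥ A *ᵥ (x + u + v) =
      (x + u) ⬝ᵥ A *ᵥ (x + u) + (x + v) ⬝ᵥ A *ᵥ (x + v) + 2 * (u ⬝ᵥ A *ᵥ v) := by
  simp only [add_dotProduct, dotProduct_add, mulVec_add]
  linear_combination hA.dotProduct_mulVec_comm v u

theorem Int.cast_comp_add {ι R : Type*} [AddGroupWithOne R] (u v : ι → ℤ) :
    (Int.cast ∘ (u + v) : ι → R) = Int.cast ∘ u + Int.cast ∘ v :=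
  funext fun i => Int.cast_add (u i) (v i)

theorem Int.cast_comp_sub {ι R : Type*} [AddGroupWithOne R] (u v : ι → ℤ) :
    (Int.cast ∘ (u - v) : ι → R) = Int.cast ∘ u - Int.cast ∘ v :=
  funext fun i => Int.cast_sub (u i) (v i)

section Multimodular

variable {n : ℕ} {A : Matrix (Fin n) (Fin n) ℝ}

theorem Matrix.IsSymm.coe_second_difference_le_iff (hA : A.IsSymm) (z d d' : Fin n → ℤ) :
    let f : (Fin n → ℤ) → WithTop ℝ := fun x => ((Int.cast ∘ x) ⬝ᵥ A *ᵥ (Int.cast ∘ x) : ℝ)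
    f z + f (z + d + d') ≤ f (z + d) + f (z + d') ↔
      (Int.cast ∘ d) ⬝ᵥ A *ᵥ (Int.cast ∘ d') ≤ 0 := by
  intro f
  simp only [f, ← WithTop.coe_add, WithTop.coe_le_coe, Int.cast_comp_add, hA.second_difference]
  constructor <;> intro h <;> linarith

theorem Matrix.IsSymm.multimodular_quadratic_iff (hA : A.IsSymm) :
    Multimodular (fun x : Fin n → ℤ => (((Int.cast ∘ x) ⬝ᵥ A *ᵥ (Int.cast ∘ x) : ℝ) : WithTop ℝ)) ↔
      ∀ d ∈ mmDir n, ∀ d' ∈ mmDir n, d ≠ d' →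
        (Int.cast ∘ d) ⬝ᵥ A *ᵥ (Int.cast ∘ d') ≤ (0 : ℝ) := by
  constructor
  · intro h d hd d' hd' hne
    simpa using
      (hA.coe_second_difference_le_iff 0 d d').1 (h 0 WithTop.coe_ne_top d hd d' hd' hne)
  · exact fun h z _ d hd d' hd' hne =>
      (hA.coe_second_difference_le_iff z d d').2 (h d hd d' hd' hne)

end Multimodular

/-- The unit vector `eₖ` of `Rⁿ`, indexed from `1`, so that `e₀ = eₙ₊₁ = 0`. -/
def padUnit (R : Type*) [Zero R] [One R] (n k : ℕ) : Fin n → R :=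
  fun j => if (j : ℕ) + 1 = k then 1 else 0

def paddedEntry {R : Type*} [Zero R] {n : ℕ} (A : Matrix (Fin n) (Fin n) R) (k l : ℕ) : R :=
  if h : 1 ≤ k ∧ k ≤ n ∧ 1 ≤ l ∧ l ≤ n then
    A ⟨k - 1, Nat.sub_one_lt_of_le h.1 h.2.1⟩ ⟨l - 1, Nat.sub_one_lt_of_le h.2.2.1 h.2.2.2⟩
  else 0

section Directions

variable {R : Type*} {n : ℕ}

theorem mem_mmDir {d : Fin n → ℤ} :
    d ∈ mmDir n ↔ ∃ k ≤ n, d = padUnit ℤ n k - padUnit ℤ n (k + 1) :=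
  Iff.rfl

theorem sub_padUnit_succ_ne {k l : ℕ} (hkl : k < l) (hl : l ≤ n) :
    padUnit ℤ n k - padUnit ℤ n (k + 1) ≠ padUnit ℤ n l - padUnit ℤ n (l + 1) := by
  intro h
  have := congrFun h ⟨l - 1, by omega⟩
  simp only [Pi.sub_apply, padUnit] at this
  split_ifs at this <;> omega

theorem forall_mmDir_ne_iff {P : (Fin n → ℤ) → (Fin n → ℤ) → Prop}
    (hP : ∀ d d', P d d' → P d' d) :
    (∀ d ∈ mmDir n, ∀ d' ∈ mmDir n, d ≠ d' → P d d') ↔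
      ∀ k l, k < l → l ≤ n →
        P (padUnit ℤ n k - padUnit ℤ n (k + 1)) (padUnit ℤ n l - padUnit ℤ n (l + 1)) := by
  constructor
  · exact fun h k l hkl hl =>
      h _ (mem_mmDir.2 ⟨k, by omega, rfl⟩) _ (mem_mmDir.2 ⟨l, hl, rfl⟩) (sub_padUnit_succ_ne hkl hl)
  · rintro h _ ⟨k, hk, rfl⟩ _ ⟨l, hl, rfl⟩ hne
    rcases lt_trichotomy k l with hkl | rfl | hlk
    · exact h k l hkl hl
    · exact absurd rfl hne
    · exact hP _ _ (h l k hlk hk)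

theorem Int.cast_comp_padUnit [AddGroupWithOne R] (k : ℕ) :
    (Int.cast ∘ padUnit ℤ n k : Fin n → R) = padUnit R n k := by
  funext j
  simp only [Function.comp_apply, padUnit]
  split_ifs <;> simp

theorem padUnit_eq_dite [Zero R] [One R] (k : ℕ) :
    padUnit R n k = if h : 1 ≤ k ∧ k ≤ n then Pi.single ⟨k - 1, by omega⟩ 1 else 0 := by
  funext j
  split_ifs with h
  · simp only [padUnit, Pi.single_apply, Fin.ext_iff]
    exact if_congr (by omega) rfl rfl
  · simp only [padUnit, Pi.zero_apply]
    exact if_neg (by omega)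

theorem padUnit_dotProduct_mulVec_padUnit [NonAssocSemiring R] (A : Matrix (Fin n) (Fin n) R)
    (k l : ℕ) : padUnit R n k ⬝ᵥ A *ᵥ padUnit R n l = paddedEntry A k l := by
  rw [padUnit_eq_dite, padUnit_eq_dite, paddedEntry]
  by_cases hk : 1 ≤ k ∧ k ≤ n <;> by_cases hl : 1 ≤ l ∧ l ≤ n <;> simp [hk, hl]

end Directions

theorem quadratic_multimodular_iff {n : ℕ} (A : Matrix (Fin n) (Fin n) ℝ)
    (hA : A.IsSymm) :
    Multimodular (fun x : Fin n → ℤ =>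
        ((∑ i : Fin n, ∑ j : Fin n, (x i : ℝ) * A i j * (x j : ℝ) : ℝ) : WithTop ℝ)) ↔
      (∀ i j : ℕ, i < j → j ≤ n →
        (let a : ℕ → ℕ → ℝ := fun k l =>
          if h : 1 ≤ k ∧ k ≤ n ∧ 1 ≤ l ∧ l ≤ n then
            A ⟨k - 1, by omega⟩ ⟨l - 1, by omega⟩ else 0
        a i j - a i (j + 1) - a (i + 1) j + a (i + 1) (j + 1) ≤ 0)) := by
  simp only [sum_sum_mul_mul_eq_dotProduct_mulVec]
  refine hA.multimodular_quadratic_iff.trans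
    ((forall_mmDir_ne_iff fun d d' h => by rwa [hA.dotProduct_mulVec_comm]).trans ?_)
  refine forall₄_congr fun k l _ _ => ?_
  simp only [Int.cast_comp_sub, Int.cast_comp_padUnit, sub_dotProduct, dotProduct_sub, mulVec_sub,
    padUnit_dotProduct_mulVec_padUnit]
  exact iff_of_eq (congrArg (· ≤ 0) (by unfold paddedEntry; ring))
end

section
/- A quadratic function g(p) = pᵀBp on ℤⁿ with symmetric matrix B = (b_{ij}) is L♮-convex if and only if b_{ij} ≤ 0 for all i ≠ j and b_{ii} ≥ Σ_{j≠i} |b_{ij}| for all i (i.e., B is a diagonally dominant symmetric matrix with nonpositive off-diagonal entries). -/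
namespace QLnatAux

/-- The quadratic form of `B`. -/
def Qf {n : ℕ} (B : Matrix (Fin n) (Fin n) ℝ) (x : Fin n → ℝ) : ℝ :=
  ∑ i, ∑ j, x i * B i j * x j

variable {n : ℕ}

lemma Qf_pair (B : Matrix (Fin n) (Fin n) ℝ) (a b : Fin n → ℝ) :
    Qf B (a + b) + Qf B (a - b) = 2 * Qf B a + 2 * Qf B b := by
  simp only [Qf, Pi.add_apply, Pi.sub_apply, Finset.mul_sum, ← Finset.sum_add_distrib]
  exact Finset.sum_congr rfl fun i _ => Finset.sum_congr rfl fun j _ => by ring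

lemma sq_le_of_parity {c e : ℤ} (h0 : e = 0 ∨ e = 1 ∨ e = -1)
    (hpar : (c - e) % 2 = 0) : e ^ 2 ≤ c ^ 2 := by
  rcases h0 with h | h | h
  · subst h; simpa using sq_nonneg c
  all_goals {
    subst h
    obtain ⟨m, hm⟩ : ∃ m, c = 2 * m + 1 := ⟨c / 2, by omega⟩
    subst hm
    rcases le_or_gt 0 m with h' | h' <;> nlinarith }

lemma Qf_decomp {B : Matrix (Fin n) (Fin n) ℝ} (hB : B.IsSymm) (x : Fin n → ℝ) :
    Qf B x = ∑ i, (∑ j, B i j) * x i ^ 2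
      - (1 / 2) * ∑ i, ∑ j, B i j * (x i - x j) ^ 2 := by
  have hswap : ∑ i, ∑ j, B i j * x j ^ 2 = ∑ i, ∑ j, B i j * x i ^ 2 := by
    rw [Finset.sum_comm]
    exact Finset.sum_congr rfl fun i _ => Finset.sum_congr rfl fun j _ => by
      rw [hB.apply]
  have expand : ∀ i, ∑ j, B i j * (x i - x j) ^ 2
      = ∑ j, (B i j * x i ^ 2 + B i j * x j ^ 2 - 2 * (x i * B i j * x j)) :=
    fun i => Finset.sum_congr rfl fun j _ => by ring
  simp only [Qf, expand, Finset.sum_sub_distrib, Finset.sum_add_distrib,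
    Finset.sum_mul, ← Finset.mul_sum]
  rw [hswap]
  ring

/-- L♮-convexity of the quadratic form is equivalent to the "parity vector"
inequality. -/
lemma central (B : Matrix (Fin n) (Fin n) ℝ) :
    LnatConvex (fun p : Fin n → ℤ =>
        ((∑ i : Fin n, ∑ j : Fin n, (p i : ℝ) * B i j * (p j : ℝ) : ℝ) : WithTop ℝ)) ↔
      ∀ p q : Fin n → ℤ,
        Qf B (fun k => (((p k + q k) % 2 : ℤ) : ℝ)) ≤ Qf B (fun k => ((p k - q k : ℤ) : ℝ)) := by
  have hg : ∀ p : Fin n → ℤ,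
      (∑ i : Fin n, ∑ j : Fin n, (p i : ℝ) * B i j * (p j : ℝ)) = Qf B (fun k => (p k : ℝ)) :=
    fun p => rfl
  have step : ∀ p q : Fin n → ℤ,
      ((Qf B (fun j => ((Int.fdiv (p j + q j + 1) 2 : ℤ) : ℝ))
          + Qf B (fun j => ((Int.fdiv (p j + q j) 2 : ℤ) : ℝ))
        ≤ Qf B (fun k => (p k : ℝ)) + Qf B (fun k => (q k : ℝ)))
      ↔ Qf B (fun k => (((p k + q k) % 2 : ℤ) : ℝ)) ≤ Qf B (fun k => ((p k - q k : ℤ) : ℝ))) := by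
    intro p q
    set r : Fin n → ℝ := fun j => ((Int.fdiv (p j + q j + 1) 2 : ℤ) : ℝ) with hr
    set f : Fin n → ℝ := fun j => ((Int.fdiv (p j + q j) 2 : ℤ) : ℝ) with hf
    have e1 : r + f = (fun k => (p k : ℝ)) + (fun k => (q k : ℝ)) := by
      funext k
      simp only [Pi.add_apply, hr, hf]
      have : Int.fdiv (p k + q k + 1) 2 + Int.fdiv (p k + q k) 2 = p k + q k := by
        rw [Int.fdiv_eq_ediv_of_nonneg _ (by norm_num), Int.fdiv_eq_ediv_of_nonneg _ (by norm_num)]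
        omega
      exact_mod_cast this
    have e2 : r - f = fun k => (((p k + q k) % 2 : ℤ) : ℝ) := by
      funext k
      simp only [Pi.sub_apply, hr, hf]
      have : Int.fdiv (p k + q k + 1) 2 - Int.fdiv (p k + q k) 2 = (p k + q k) % 2 := by
        rw [Int.fdiv_eq_ediv_of_nonneg _ (by norm_num), Int.fdiv_eq_ediv_of_nonneg _ (by norm_num)]
        omega
      exact_mod_cast this
    have h1 := Qf_pair B r f
    have h2 := Qf_pair B (fun k => (p k : ℝ)) (fun k => (q k : ℝ))
    rw [e1, e2] at h1
    have e3 : ((fun k => (p k : ℝ)) - fun k => (q k : ℝ)) = fun k => ((p k - q k : ℤ) : ℝ) := by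
      funext k; push_cast; rfl
    rw [e3] at h2
    constructor <;> intro h <;> nlinarith [h1, h2]
  constructor
  · intro h p q
    have := h p q
    simp only [hg, ← WithTop.coe_add, WithTop.coe_le_coe] at this
    exact (step p q).mp this
  · intro h p q
    simp only [hg, ← WithTop.coe_add, WithTop.coe_le_coe]
    exact (step p q).mpr (h p q)

lemma key_of_cond {B : Matrix (Fin n) (Fin n) ℝ} (hB : B.IsSymm)
    (hoff : ∀ i j : Fin n, i ≠ j → B i j ≤ 0) (hrow : ∀ i : Fin n, 0 ≤ ∑ j, B i j)
    (p q : Fin n → ℤ) :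
    Qf B (fun k => (((p k + q k) % 2 : ℤ) : ℝ)) ≤ Qf B (fun k => ((p k - q k : ℤ) : ℝ)) := by
  rw [Qf_decomp hB, Qf_decomp hB]
  have hsq : ∀ k, (((p k + q k) % 2 : ℤ) : ℝ) ^ 2 ≤ ((p k - q k : ℤ) : ℝ) ^ 2 := by
    intro k
    have : ((p k + q k) % 2) ^ 2 ≤ (p k - q k) ^ 2 :=
      sq_le_of_parity (by omega) (by omega)
    exact_mod_cast this
  have h1 : ∑ i, (∑ j, B i j) * (((p i + q i) % 2 : ℤ) : ℝ) ^ 2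
      ≤ ∑ i, (∑ j, B i j) * ((p i - q i : ℤ) : ℝ) ^ 2 :=
    Finset.sum_le_sum fun i _ => mul_le_mul_of_nonneg_left (hsq i) (hrow i)
  have h2 : ∑ i, ∑ j, B i j * (((p i - q i : ℤ) : ℝ) - ((p j - q j : ℤ) : ℝ)) ^ 2
      ≤ ∑ i, ∑ j, B i j * ((((p i + q i) % 2 : ℤ) : ℝ) - (((p j + q j) % 2 : ℤ) : ℝ)) ^ 2 := by
    refine Finset.sum_le_sum fun i _ => Finset.sum_le_sum fun j _ => ?_
    by_cases hij : i = j
    · subst hij; simp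
    · have hd : ((((p i + q i) % 2 : ℤ) : ℝ) - (((p j + q j) % 2 : ℤ) : ℝ)) ^ 2
          ≤ (((p i - q i : ℤ) : ℝ) - ((p j - q j : ℤ) : ℝ)) ^ 2 := by
        have : ((p i + q i) % 2 - (p j + q j) % 2) ^ 2
            ≤ ((p i - q i) - (p j - q j)) ^ 2 :=
          sq_le_of_parity (by omega) (by omega)
        exact_mod_cast this
      exact mul_le_mul_of_nonpos_left hd (hoff i j hij)
  linarith

lemma Qf_two (B : Matrix (Fin n) (Fin n) ℝ) {i j : Fin n} (hij : i ≠ j) (u v : ℝ) :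
    Qf B (fun k => (if k = i then u else 0) + (if k = j then v else 0))
      = u ^ 2 * B i i + u * v * B i j + u * v * B j i + v ^ 2 * B j j := by
  simp only [Qf, add_mul, mul_add, Finset.sum_add_distrib, ite_mul, mul_ite,
    zero_mul, mul_zero, zero_add, add_zero]
  simp [Finset.sum_add_distrib, Finset.sum_ite_eq', hij, hij.symm]
  ring

lemma Qf_one (B : Matrix (Fin n) (Fin n) ℝ) (i : Fin n) (c : ℝ) :
    Qf B (fun k => 1 + (if k = i then c else 0))
      = (∑ a, ∑ b, B a b) + c * (∑ b, B i b) + c * (∑ a, B a i) + c ^ 2 * B i i := by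
  simp only [Qf, add_mul, mul_add, Finset.sum_add_distrib, ite_mul, mul_ite,
    zero_mul, mul_zero, one_mul, mul_one, zero_add, add_zero]
  simp [Finset.sum_add_distrib, Finset.sum_ite_eq', Finset.mul_sum]
  have h : ∑ x : Fin n, B x i * c = ∑ x : Fin n, c * B x i :=
    Finset.sum_congr rfl fun x _ => mul_comm _ _
  rw [h]; ring

end QLnatAux

theorem quadratic_lnatConvex_iff {n : ℕ} (B : Matrix (Fin n) (Fin n) ℝ)
    (hB : B.IsSymm) :
    LnatConvex (fun p : Fin n → ℤ =>
        ((∑ i : Fin n, ∑ j : Fin n, (p i : ℝ) * B i j * (p j : ℝ) : ℝ) : WithTop ℝ)) ↔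
      ((∀ i j : Fin n, i ≠ j → B i j ≤ 0) ∧
        ∀ i : Fin n, ∑ j ∈ Finset.univ.erase i, |B i j| ≤ B i i) := by
  have hsym : ∀ a b : Fin n, B a b = B b a := fun a b => by
    conv_lhs => rw [← hB]
    rfl
  rw [QLnatAux.central B]
  constructor
  · intro key
    have hoff : ∀ i j : Fin n, i ≠ j → B i j ≤ 0 := by
      intro i j hij
      have hkey := key (fun k => if k = i then (1 : ℤ) else 0)
        (fun k => if k = j then 1 else 0)
      have eL : (fun k => ((((if k = i then (1 : ℤ) else 0) + (if k = j then 1 else 0)) % 2 : ℤ) : ℝ))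
          = fun k => (if k = i then (1 : ℝ) else 0) + (if k = j then 1 else 0) := by
        funext k
        by_cases h1 : k = i <;> by_cases h2 : k = j <;>
          simp_all [hij] <;> norm_num
      have eR : (fun k => (((if k = i then (1 : ℤ) else 0) - (if k = j then 1 else 0) : ℤ) : ℝ))
          = fun k => (if k = i then (1 : ℝ) else 0) + (if k = j then (-1 : ℝ) else 0) := by
        funext k
        by_cases h1 : k = i <;> by_cases h2 : k = j <;>
          simp_all [hij] <;> norm_num
      rw [eL, eR, QLnatAux.Qf_two B hij 1 1, QLnatAux.Qf_two B hij 1 (-1)] at hkey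
      have := hsym i j
      nlinarith [hkey]
    refine ⟨hoff, fun i => ?_⟩
    have hrow : 0 ≤ ∑ b, B i b := by
      have hkey := key (fun k => 1 + (if k = i then (1 : ℤ) else 0)) (fun _ => 0)
      have eL : (fun k => ((((1 + (if k = i then (1 : ℤ) else 0)) + 0) % 2 : ℤ) : ℝ))
          = fun k => 1 + (if k = i then (-1 : ℝ) else 0) := by
        funext k
        by_cases h1 : k = i <;> simp [h1] <;> norm_num
      have eR : (fun k => (((1 + (if k = i then (1 : ℤ) else 0)) - 0 : ℤ) : ℝ))
          = fun k => 1 + (if k = i then (1 : ℝ) else 0) := by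
        funext k
        by_cases h1 : k = i <;> simp [h1] <;> norm_num
      rw [eL, eR, QLnatAux.Qf_one B i (-1), QLnatAux.Qf_one B i 1] at hkey
      have hcol : ∑ a, B a i = ∑ b, B i b :=
        Finset.sum_congr rfl fun a _ => hsym a i
      rw [hcol] at hkey
      nlinarith [hkey]
    have habs : ∑ j ∈ Finset.univ.erase i, |B i j| = -∑ j ∈ Finset.univ.erase i, B i j := by
      rw [← Finset.sum_neg_distrib]
      exact Finset.sum_congr rfl fun j hj =>
        abs_of_nonpos (hoff i j (Ne.symm (Finset.mem_erase.mp hj).1))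
    have hsplit : ∑ j ∈ Finset.univ.erase i, B i j + B i i = ∑ j, B i j :=
      Finset.sum_erase_add _ _ (Finset.mem_univ i)
    rw [habs]
    linarith
  · rintro ⟨hoff, hdom⟩
    have hrow : ∀ i : Fin n, 0 ≤ ∑ j, B i j := by
      intro i
      have habs : ∑ j ∈ Finset.univ.erase i, |B i j| = -∑ j ∈ Finset.univ.erase i, B i j := by
        rw [← Finset.sum_neg_distrib]
        exact Finset.sum_congr rfl fun j hj =>
          abs_of_nonpos (hoff i j (Ne.symm (Finset.mem_erase.mp hj).1))
      have hsplit : ∑ j ∈ Finset.univ.erase i, B i j + B i i = ∑ j, B i j :=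
        Finset.sum_erase_add _ _ (Finset.mem_univ i)
      have := hdom i
      rw [habs] at this
      linarith
    exact QLnatAux.key_of_cond hB hoff hrow
end

section
/- For an L♮-convex function g : ℤⁿ → ℝ ∪ {+∞}, the function g̃(p) = g(-(p_{n-1}, p_{n-2}, ..., p₁, 0) + pₙ·1), where 1 = (1,...,1) ∈ ℤⁿ, is L♮-convex. -/
private lemma fdiv2 (x : ℤ) : Int.fdiv x 2 = x / 2 :=
  Int.fdiv_eq_ediv_of_nonneg x (by norm_num)

theorem lnatConvex_reversalTransform {n : ℕ} (hn : 0 < n)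
    (g : (Fin n → ℤ) → WithTop ℝ) (hg : LnatConvex g) :
    LnatConvex (fun p : Fin n → ℤ =>
      g (fun j : Fin n =>
        p ⟨n - 1, by omega⟩ -
          (if h : (j : ℕ) + 2 ≤ n then p ⟨n - 2 - (j : ℕ), by omega⟩ else 0))) := by
  intro p q
  dsimp only
  set P : Fin n → ℤ := fun j : Fin n =>
      p ⟨n - 1, by omega⟩ -
        (if h : (j : ℕ) + 2 ≤ n then p ⟨n - 2 - (j : ℕ), by omega⟩ else 0) with hP
  set Q : Fin n → ℤ := fun j : Fin n =>
      q ⟨n - 1, by omega⟩ -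
        (if h : (j : ℕ) + 2 ≤ n then q ⟨n - 2 - (j : ℕ), by omega⟩ else 0) with hQ
  have key := hg P Q
  rcases Int.even_or_odd (p ⟨n - 1, by omega⟩ + q ⟨n - 1, by omega⟩) with ⟨k, hk⟩ | ⟨k, hk⟩
  · -- even case: arguments are swapped
    have h1 : (fun j : Fin n =>
        Int.fdiv (p ⟨n - 1, by omega⟩ + q ⟨n - 1, by omega⟩ + 1) 2 -
          (if h : (j : ℕ) + 2 ≤ n then Int.fdiv (p ⟨n - 2 - (j : ℕ), by omega⟩
            + q ⟨n - 2 - (j : ℕ), by omega⟩ + 1) 2 else 0))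
        = (fun j => Int.fdiv (P j + Q j) 2) := by
      funext j
      simp only [hP, hQ]
      by_cases h : (j : ℕ) + 2 ≤ n <;> simp only [h, dif_pos, dif_neg, if_pos, if_neg,
        not_false_iff, dite_true, dite_false] <;> simp only [fdiv2] <;> omega
    have h2 : (fun j : Fin n =>
        Int.fdiv (p ⟨n - 1, by omega⟩ + q ⟨n - 1, by omega⟩) 2 -
          (if h : (j : ℕ) + 2 ≤ n then Int.fdiv (p ⟨n - 2 - (j : ℕ), by omega⟩
            + q ⟨n - 2 - (j : ℕ), by omega⟩) 2 else 0))
        = (fun j => Int.fdiv (P j + Q j + 1) 2) := by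
      funext j
      simp only [hP, hQ]
      by_cases h : (j : ℕ) + 2 ≤ n <;> simp only [h, dif_pos, dif_neg, if_pos, if_neg,
        not_false_iff, dite_true, dite_false] <;> simp only [fdiv2] <;> omega
    rw [h1, h2, add_comm]
    exact key
  · have h1 : (fun j : Fin n =>
        Int.fdiv (p ⟨n - 1, by omega⟩ + q ⟨n - 1, by omega⟩ + 1) 2 -
          (if h : (j : ℕ) + 2 ≤ n then Int.fdiv (p ⟨n - 2 - (j : ℕ), by omega⟩
            + q ⟨n - 2 - (j : ℕ), by omega⟩ + 1) 2 else 0))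
        = (fun j => Int.fdiv (P j + Q j + 1) 2) := by
      funext j
      simp only [hP, hQ]
      by_cases h : (j : ℕ) + 2 ≤ n <;> simp only [h, dif_pos, dif_neg, if_pos, if_neg,
        not_false_iff, dite_true, dite_false] <;> simp only [fdiv2] <;> omega
    have h2 : (fun j : Fin n =>
        Int.fdiv (p ⟨n - 1, by omega⟩ + q ⟨n - 1, by omega⟩) 2 -
          (if h : (j : ℕ) + 2 ≤ n then Int.fdiv (p ⟨n - 2 - (j : ℕ), by omega⟩
            + q ⟨n - 2 - (j : ℕ), by omega⟩) 2 else 0))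
        = (fun j => Int.fdiv (P j + Q j) 2) := by
      funext j
      simp only [hP, hQ]
      by_cases h : (j : ℕ) + 2 ≤ n <;> simp only [h, dif_pos, dif_neg, if_pos, if_neg,
        not_false_iff, dite_true, dite_false] <;> simp only [fdiv2] <;> omega
    rw [h1, h2]
    exact key
end

section
/- The quadratic function f(x) = x₁² + 2x₂² + x₃² + 2x₁x₂ + 2x₂x₃ on ℤ³ (with coefficient matrix A having rows (1,1,0), (1,2,1), (0,1,1)) is multimodular, but the function f̃(x₁,x₂,x₃) = f(x₂,x₁,x₃) obtained by transposing the first two variables is not multimodular. Hence multimodularity is not preserved by arbitrary permutations of variables. -/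
/-- The quadratic `f(x) = x₁² + 2x₂² + x₃² + 2x₁x₂ + 2x₂x₃`. -/
noncomputable def fEx10 : (Fin 3 → ℤ) → WithTop ℝ := fun x =>
  (((x 0 : ℝ) ^ 2 + 2 * (x 1 : ℝ) ^ 2 + (x 2 : ℝ) ^ 2
      + 2 * (x 0 : ℝ) * (x 1 : ℝ) + 2 * (x 1 : ℝ) * (x 2 : ℝ) : ℝ) : WithTop ℝ)

/-!
For a symmetric integer matrix `A`, the second difference of `x ↦ xᵀAx` along `d, d'` is the
constant `-2 dᵀAd'`, so the quadratic form is multimodular iff `dᵀAd' ≤ 0` for all distinct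
`d, d' ∈ F`, a finite check. Swapping `x₁` and `x₂` conjugates `A` into the matrix with rows
`(2,1,1), (1,1,0), (1,0,1)`, for which `(e₁ - e₂)ᵀ Ã e₃ = 1 > 0`.
-/

open Matrix

-- `e_k - e_{k+1}`, with the conventions `e₀ = eₙ₊₁ = 0`.
def mmVec (n k : ℕ) : Fin n → ℤ := fun j =>
  (if (j : ℕ) + 1 = k then 1 else 0) - (if (j : ℕ) + 1 = k + 1 then 1 else 0)

noncomputable def quadraticOf {n : ℕ} (A : Matrix (Fin n) (Fin n) ℤ) (x : Fin n → ℤ) :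
    WithTop ℝ :=
  ((x ⬝ᵥ A *ᵥ x : ℤ) : ℝ)

lemma dotProduct_mulVec_second_difference {ι R : Type*} [Fintype ι] [CommRing R]
    {A : Matrix ι ι R} (hA : A.IsSymm) (z d d' : ι → R) :
    (z + d + d') ⬝ᵥ A *ᵥ (z + d + d') + z ⬝ᵥ A *ᵥ z =
      (z + d) ⬝ᵥ A *ᵥ (z + d) + (z + d') ⬝ᵥ A *ᵥ (z + d') + 2 * (d ⬝ᵥ A *ᵥ d') := by
  have hsymm : d' ⬝ᵥ A *ᵥ d = d ⬝ᵥ A *ᵥ d' := by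
    rw [dotProduct_comm, ← vecMul_transpose, hA.eq, dotProduct_mulVec]
  simp only [mulVec_add, add_dotProduct, dotProduct_add, hsymm]
  ring

lemma quadraticOf_add_le_add_iff {n : ℕ} {A : Matrix (Fin n) (Fin n) ℤ} (hA : A.IsSymm)
    (z d d' : Fin n → ℤ) :
    quadraticOf A z + quadraticOf A (z + d + d') ≤ quadraticOf A (z + d) + quadraticOf A (z + d')
      ↔ d ⬝ᵥ A *ᵥ d' ≤ 0 := by
  have := dotProduct_mulVec_second_difference hA z d d'
  simp only [quadraticOf, ← WithTop.coe_add, WithTop.coe_le_coe]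
  norm_cast
  constructor <;> intro h <;> linarith

lemma multimodular_quadraticOf_iff {n : ℕ} {A : Matrix (Fin n) (Fin n) ℤ} (hA : A.IsSymm) :
    Multimodular (quadraticOf A) ↔
      ∀ k ≤ n, ∀ k' ≤ n, mmVec n k ≠ mmVec n k' → mmVec n k ⬝ᵥ A *ᵥ mmVec n k' ≤ 0 := by
  constructor
  · rintro h k hk k' hk' hne
    exact (quadraticOf_add_le_add_iff hA 0 _ _).1
      (h 0 WithTop.coe_ne_top _ ⟨k, hk, rfl⟩ _ ⟨k', hk', rfl⟩ hne)
  · rintro h z - d ⟨k, hk, rfl⟩ d' ⟨k', hk', rfl⟩ hne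
    exact (quadraticOf_add_le_add_iff hA z _ _).2 (h k hk k' hk' hne)

lemma dotProduct_submatrix_mulVec {ι R : Type*} [Fintype ι] [CommRing R] (A : Matrix ι ι R)
    (σ : ι ≃ ι) (x : ι → R) :
    x ⬝ᵥ A.submatrix σ σ *ᵥ x = (x ∘ σ.symm) ⬝ᵥ A *ᵥ (x ∘ σ.symm) := by
  rw [submatrix_mulVec_equiv, ← comp_equiv_symm_dotProduct]

def exampleMatrix : Matrix (Fin 3) (Fin 3) ℤ := !![1, 1, 0; 1, 2, 1; 0, 1, 1]

lemma fEx10_eq_quadraticOf : fEx10 = quadraticOf exampleMatrix := by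
  ext x
  simp only [fEx10, quadraticOf, WithTop.coe_eq_coe]
  simp only [dotProduct, mulVec, exampleMatrix, of_apply, cons_val', cons_val_fin_one,
    Fin.sum_univ_three, cons_val_zero, cons_val_one, cons_val, one_mul, zero_mul, add_zero, zero_add,
    Int.cast_add, Int.cast_mul, Int.cast_ofNat]
  ring

lemma fEx10_swap_eq_quadraticOf :
    (fun x : Fin 3 → ℤ => fEx10 ![x 1, x 0, x 2]) =
      quadraticOf (exampleMatrix.submatrix (Equiv.swap 0 1) (Equiv.swap 0 1)) := by
  ext x
  rw [fEx10_eq_quadraticOf, quadraticOf, quadraticOf, dotProduct_submatrix_mulVec,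
    Equiv.symm_swap]
  congr 4 <;> ext i <;> fin_cases i <;> rfl

theorem multimodular_not_preserved_by_transposition :
    Multimodular fEx10 ∧
      ¬ Multimodular (fun x : Fin 3 → ℤ => fEx10 ![x 1, x 0, x 2]) := by
  have hA : exampleMatrix.IsSymm := by decide
  rw [fEx10_swap_eq_quadraticOf, fEx10_eq_quadraticOf, multimodular_quadraticOf_iff hA,
    multimodular_quadraticOf_iff (hA.submatrix _)]
  refine ⟨by decide, fun h => ?_⟩
  exact absurd (h 1 (by norm_num) 3 (by norm_num) (by decide)) (by decide)
end
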